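/- The polynomials Δ₁(a) = a₄² − 4a₂a₆ and Δ₂(a) = a₄³ + 2a₃a₄² − 4a₂a₄a₆ + 2a₁a₄a₅ − 8a₂a₃a₆ − 2a₂a₅² − 2a₁²a₆ each satisfy, at every point a ∈ ℝ⁶, the five determining equations for invariants of the heat-equation symmetry algebra: (i) a₄φ₁ − a₅φ₃ + 2a₆φ₅ = 0; (ii) a₅φ₁ + a₄φ₂ + a₆(2φ₄ − φ₃) = 0; (iii) −a₁φ₁ − 2a₂φ₂ + a₅φ₅ + 2a₆φ₆ = 0; (iv) −2a₂φ₁ + a₁φ₃ − a₄φ₅ = 0; (v) 2a₂φ₃ − 4a₂φ₄ − 2a₁φ₅ − 2a₄φ₆ = 0, where φᵢ denotes the partial derivative ∂φ/∂aᵢ of the polynomial φ ∈ {Δ₁, Δ₂}. -/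

import Mathlib

/-- the killing-form invariant Δ₁ = a₄² − 4a₂a₆ -/
def Delta1 (a : Fin 6 → ℝ) : ℝ := (a 3) ^ 2 - 4 * a 1 * a 5

/-- the cubic invariant Δ₂ -/
def Delta2 (a : Fin 6 → ℝ) : ℝ :=
  (a 3) ^ 3 + 2 * a 2 * (a 3) ^ 2 - 4 * a 1 * a 3 * a 5 + 2 * a 0 * a 3 * a 4
    - 8 * a 1 * a 2 * a 5 - 2 * a 1 * (a 4) ^ 2 - 2 * (a 0) ^ 2 * a 5

/-- the partial derivative ∂φ/∂aᵢ of a function φ : ℝ⁶ → ℝ -/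
noncomputable def pd (φ : (Fin 6 → ℝ) → ℝ) (i : Fin 6) (a : Fin 6 → ℝ) : ℝ :=
  fderiv ℝ φ a (Pi.single i 1)

theorem fderiv_coord_apply {𝕜 ι : Type*} [NontriviallyNormedField 𝕜] [Fintype ι]
    (i : ι) (a v : ι → 𝕜) : fderiv 𝕜 (fun x : ι → 𝕜 => x i) a v = v i := by
  rw [(hasFDerivAt_apply i a).fderiv, ContinuousLinearMap.proj_apply]

theorem fderiv_Delta1_apply (a v : Fin 6 → ℝ) :
    fderiv ℝ Delta1 a v = 2 * a 3 * v 3 - 4 * (a 5 * v 1 + a 1 * v 5) := by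
  unfold Delta1
  simp (disch := fun_prop) only [fderiv_fun_sub, fderiv_fun_mul,
    fderiv_fun_pow, fderiv_coord_apply, fderiv_const_apply, zero_apply, sub_apply, add_apply,
    smul_apply, smul_eq_mul]
  ring

theorem fderiv_Delta2_apply (a v : Fin 6 → ℝ) :
    fderiv ℝ Delta2 a v =
      (2 * a 3 * a 4 - 4 * a 0 * a 5) * v 0
      - (4 * a 3 * a 5 + 8 * a 2 * a 5 + 2 * a 4 ^ 2) * v 1
      + (2 * a 3 ^ 2 - 8 * a 1 * a 5) * v 2
      + (3 * a 3 ^ 2 + 4 * a 2 * a 3 - 4 * a 1 * a 5 + 2 * a 0 * a 4) * v 3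
      + (2 * a 0 * a 3 - 4 * a 1 * a 4) * v 4
      - (4 * a 1 * a 3 + 8 * a 1 * a 2 + 2 * a 0 ^ 2) * v 5 := by
  unfold Delta2
  simp (disch := fun_prop) only [fderiv_fun_sub, fderiv_fun_add,
    fderiv_fun_mul, fderiv_fun_pow, fderiv_coord_apply, fderiv_const_apply, zero_apply, sub_apply,
    add_apply, smul_apply, smul_eq_mul]
  ring

theorem heat_determining_equations :
    ∀ φ ∈ ({Delta1, Delta2} : Set ((Fin 6 → ℝ) → ℝ)), ∀ a : Fin 6 → ℝ,
      a 3 * pd φ 0 a - a 4 * pd φ 2 a + 2 * a 5 * pd φ 4 a = 0 ∧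
      a 4 * pd φ 0 a + a 3 * pd φ 1 a + a 5 * (2 * pd φ 3 a - pd φ 2 a) = 0 ∧
      -(a 0) * pd φ 0 a - 2 * a 1 * pd φ 1 a + a 4 * pd φ 4 a
        + 2 * a 5 * pd φ 5 a = 0 ∧
      -2 * a 1 * pd φ 0 a + a 0 * pd φ 2 a - a 3 * pd φ 4 a = 0 ∧
      2 * a 1 * pd φ 2 a - 4 * a 1 * pd φ 3 a - 2 * a 0 * pd φ 4 a
        - 2 * a 3 * pd φ 5 a = 0 := by
  rintro φ (rfl | rfl) a
  · refine ⟨?_, ?_, ?_, ?_, ?_⟩ <;> simp [pd, fderiv_Delta1_apply] <;> ring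
  · refine ⟨?_, ?_, ?_, ?_, ?_⟩ <;> simp [pd, fderiv_Delta2_apply] <;> ring
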